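/- Let G be a connected graph of order n ≥ 2, let H be a connected graph with at least two vertices, and let v be a vertex of H that belongs to some strong metric basis of H. Then n·dim_s(H) − 1 ≤ dim_s(G∘_v H) ≤ (|∂(H)| − 1)(n − 1) + dim_s(H) − 1. -/

import Mathlib

namespace RootedStrong

variable {V : Type*}

/-- `u` is maximally distant from `v`: every neighbor `w` of `u` satisfies `d(v,w) ≤ d(u,v)`. -/
def MaxDistant (G : SimpleGraph V) (u v : V) : Prop :=
  ∀ w, G.Adj u w → G.dist v w ≤ G.dist u v

/-- `u` and `v` are mutually maximally distant. -/
def MMD (G : SimpleGraph V) (u v : V) : Prop :=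
  MaxDistant G u v ∧ MaxDistant G v u

/-- The boundary `∂(G)` of a graph. -/
def boundary (G : SimpleGraph V) : Set V := {u | ∃ v, MMD G u v}

/-- A vertex is simplicial if its neighborhood induces a complete graph. -/
def Simplicial (G : SimpleGraph V) (u : V) : Prop :=
  ∀ x ∈ G.neighborSet u, ∀ y ∈ G.neighborSet u, x ≠ y → G.Adj x y

/-- The set `σ(G)` of simplicial vertices. -/
def simplicialSet (G : SimpleGraph V) : Set V := {u | Simplicial G u}

/-- `w` strongly resolves `u` and `v`. -/
def StronglyResolves (G : SimpleGraph V) (w u v : V) : Prop :=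
  G.dist w u = G.dist w v + G.dist v u ∨ G.dist w v = G.dist w u + G.dist u v

/-- A set of vertices is a strong metric generator if every pair of distinct vertices is
strongly resolved by some of its elements. -/
def IsStrongGenerator (G : SimpleGraph V) (S : Set V) : Prop :=
  ∀ u v : V, u ≠ v → ∃ w ∈ S, StronglyResolves G w u v

/-- The strong metric dimension of a graph. -/
noncomputable def sdim (G : SimpleGraph V) [Fintype V] : ℕ :=
  sInf {n | ∃ S : Finset V, S.card = n ∧ IsStrongGenerator G (S : Set V)}

/-- A strong metric basis: a strong metric generator of minimum cardinality. -/
def IsStrongBasis (G : SimpleGraph V) [Fintype V] (S : Finset V) : Prop :=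
  IsStrongGenerator G (S : Set V) ∧ S.card = sdim G

/-- The rooted product graph `G ∘_v H`. -/
def rootedProd {α β : Type*} (G : SimpleGraph α) (H : SimpleGraph β) (v : β) :
    SimpleGraph (α × β) where
  Adj p q := (p.1 = q.1 ∧ H.Adj p.2 q.2) ∨ (p.2 = v ∧ q.2 = v ∧ G.Adj p.1 q.1)
  symm := by
    constructor
    rintro ⟨a, x⟩ ⟨b, y⟩ (⟨h1, h2⟩ | ⟨h1, h2, h3⟩)
    · exact Or.inl ⟨h1.symm, h2.symm⟩
    · exact Or.inr ⟨h2, h1, h3.symm⟩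
  loopless := by
    constructor
    rintro ⟨a, x⟩ (⟨_, h2⟩ | ⟨_, _, h3⟩)
    · exact H.irrefl h2
    · exact G.irrefl h3

/-- Two distinct vertices are true twins if they have equal closed neighborhoods. -/
def TrueTwins (G : SimpleGraph V) (x y : V) : Prop :=
  x ≠ y ∧ ∀ z, (z = x ∨ G.Adj x z) ↔ (z = y ∨ G.Adj y z)

/-- A twin-free clique: a clique containing no pair of true twins. -/
def IsTwinFreeClique (G : SimpleGraph V) (X : Set V) : Prop :=
  (∀ x ∈ X, ∀ y ∈ X, x ≠ y → G.Adj x y) ∧ ∀ x ∈ X, ∀ y ∈ X, ¬ TrueTwins G x y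

/-- The twin-free clique number `ϖ(G)`. -/
noncomputable def twinFreeCliqueNum (G : SimpleGraph V) : ℕ :=
  sSup {n | ∃ X : Set V, IsTwinFreeClique G X ∧ X.ncard = n}


/-!
In `G ∘_v H` the distance is `d_H(x, y)` inside one copy of `H` and
`d_H(x, v) + d_G(a, b) + d_H(v, y)` between the copies of `a ≠ b`. So a vertex outside the copy
of `a` resolves a pair of that copy exactly as `v` does, and every strong metric generator of
`G ∘_v H` meets each copy in a set that becomes a strong metric generator of `H` once `v` is
added. Two copies cannot both fall short of `dim_s(H)`: each would contain a vertex `x ≠ v` that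
no generator vertex of its copy sees on a geodesic towards `v`, and the pair formed by these two
vertices would be resolved by nothing. This gives `n·dim_s(H) - 1`.

For the upper bound, a mutually maximally distant pair of `H` is strongly resolved only by its own
vertices, and every geodesic of `H` extends to one between such a pair. Hence a vertex of a strong
metric basis lies in `∂(H)`, and the basis without `v` in one copy together with `∂(H) \ {v}` in
all other copies strongly resolves `G ∘_v H`.
-/

open SimpleGraph Finset

section StrongResolving

variable {G : SimpleGraph V}

lemma stronglyResolves_comm {w u u' : V} :
    StronglyResolves G w u u' ↔ StronglyResolves G w u' u :=
  Or.comm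

lemma MMD.symm {u u' : V} (h : MMD G u u') : MMD G u' u :=
  ⟨h.2, h.1⟩

lemma sdim_le_card [Fintype V] {S : Finset V} (hS : IsStrongGenerator G S) : sdim G ≤ #S :=
  Nat.sInf_le ⟨S, rfl, hS⟩

lemma exists_isStrongGenerator_card_eq_sdim [Fintype V] :
    ∃ S : Finset V, IsStrongGenerator G S ∧ #S = sdim G := by
  obtain ⟨S, hcard, hS⟩ : sdim G ∈ {n | ∃ S : Finset V, #S = n ∧ IsStrongGenerator G S} :=
    Nat.sInf_mem ⟨_, univ, rfl, fun u _ _ => ⟨u, by simp, Or.inr (by simp)⟩⟩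
  exact ⟨S, hS, hcard⟩

lemma exists_adj_dist_add_one_eq (hG : G.Connected) {u w : V} (hne : u ≠ w) :
    ∃ z, G.Adj u z ∧ G.dist z w + 1 = G.dist u w := by
  obtain ⟨p, hp⟩ := hG.exists_walk_length_eq_dist u w
  cases p with
  | nil => exact absurd rfl hne
  | cons hadj q =>
    refine ⟨_, hadj, le_antisymm ?_ ?_⟩
    · rw [← hp, Walk.length_cons]
      exact Nat.add_le_add_right (dist_le q) 1
    · have := hadj.reachable.dist_triangle_left w
      rw [dist_eq_one_iff_adj.mpr hadj] at this
      omega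

lemma exists_maxDistant_dist_eq_add [Finite V] (hG : G.Connected) (x y : V) :
    ∃ u, MaxDistant G u y ∧ G.dist u y = G.dist u x + G.dist x y := by
  obtain ⟨u, hu, hmax⟩ := Set.exists_max_image {u | G.dist u y = G.dist u x + G.dist x y}
    (G.dist · y) (Set.toFinite _) ⟨x, by simp⟩
  refine ⟨u, fun w huw => ?_, hu⟩
  by_contra! hlt
  have hu : G.dist u y = G.dist u x + G.dist x y := hu
  have : G.dist w u = 1 := dist_eq_one_iff_adj.mpr huw.symm
  have : G.dist y w ≤ G.dist y u + G.dist u w := hG.dist_triangle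
  have : G.dist w y ≤ G.dist w x + G.dist x y := hG.dist_triangle
  have : G.dist w x ≤ G.dist w u + G.dist u x := hG.dist_triangle
  have : G.dist u w = G.dist w u := dist_comm
  have : G.dist y u = G.dist u y := dist_comm
  have : G.dist w y = G.dist y w := dist_comm
  -- a neighbour of `u` farther from `y` would extend the geodesic from `y` through `x` further
  have := hmax w (show G.dist w y = G.dist w x + G.dist x y by omega)
  omega

lemma MaxDistant.of_dist_eq_add (hG : G.Connected) {u y y' : V} (h : MaxDistant G u y)
    (hy : G.dist y' u = G.dist y' y + G.dist y u) : MaxDistant G u y' := by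
  intro w huw
  have := h w huw
  have : G.dist y' w ≤ G.dist y' y + G.dist y w := hG.dist_triangle
  have : G.dist y u = G.dist u y := dist_comm
  have : G.dist y' u = G.dist u y' := dist_comm
  omega

lemma exists_mmd_dist_eq_add [Finite V] (hG : G.Connected) (x y : V) :
    ∃ u u', MMD G u u' ∧ G.dist u y = G.dist u x + G.dist x y ∧
      G.dist u' u = G.dist u' y + G.dist y u := by
  obtain ⟨u, hu, hux⟩ := exists_maxDistant_dist_eq_add hG x y
  obtain ⟨u', hu', hu'y⟩ := exists_maxDistant_dist_eq_add hG y u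
  exact ⟨u, u', ⟨hu.of_dist_eq_add hG hu'y, hu'⟩, hux, hu'y⟩

lemma exists_mem_boundary_dist_eq_add [Finite V] (hG : G.Connected) (x y : V) :
    ∃ u ∈ boundary G, G.dist u y = G.dist u x + G.dist x y := by
  obtain ⟨u, u', hm, hux, -⟩ := exists_mmd_dist_eq_add hG x y
  exact ⟨u, ⟨u', hm⟩, hux⟩

lemma exists_mem_boundary_ne_dist_eq_add [Finite V] [Nontrivial V] (hG : G.Connected)
    (x v : V) : ∃ u ∈ boundary G, u ≠ v ∧ G.dist u v = G.dist u x + G.dist x v := by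
  have key : ∀ x, x ≠ v → ∃ u ∈ boundary G, u ≠ v ∧ G.dist u v = G.dist u x + G.dist x v := by
    intro x hxv
    obtain ⟨u, hu, hux⟩ := exists_mem_boundary_dist_eq_add hG x v
    refine ⟨u, hu, ?_, hux⟩
    rintro rfl
    have := hG.pos_dist_of_ne hxv
    simp only [SimpleGraph.dist_self] at hux
    omega
  obtain rfl | hxv := eq_or_ne x v
  · obtain ⟨x', hx'⟩ := exists_ne x
    obtain ⟨u, hu, huv, -⟩ := key x' hx'
    exact ⟨u, hu, huv, by simp⟩
  · exact key x hxv

lemma exists_mem_boundary_ne_stronglyResolves [Finite V] (hG : G.Connected) {x y : V}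
    (hxy : x ≠ y) (v : V) : ∃ u ∈ boundary G, u ≠ v ∧ StronglyResolves G u x y := by
  obtain ⟨u, hu, hux⟩ := exists_mem_boundary_dist_eq_add hG x y
  obtain ⟨u', hu', hu'y⟩ := exists_mem_boundary_dist_eq_add hG y x
  by_cases huv : u = v
  · refine ⟨u', hu', ?_, Or.inl hu'y⟩
    rintro rfl
    subst huv
    have := hG.pos_dist_of_ne hxy
    have : G.dist y x = G.dist x y := dist_comm
    omega
  · exact ⟨u, hu, huv, Or.inr hux⟩

lemma MMD.eq_or_eq_of_stronglyResolves (hG : G.Connected) {u u' w : V} (hm : MMD G u u')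
    (hw : StronglyResolves G w u u') : w = u ∨ w = u' := by
  by_contra! hne
  -- a step from `u'` towards `w` would lead away from `u`, and symmetrically
  rcases hw with h | h
  · obtain ⟨z, hz, hzw⟩ := exists_adj_dist_add_one_eq hG hne.2.symm
    have := hm.2 z hz
    have : G.dist w u ≤ G.dist w z + G.dist z u := hG.dist_triangle
    have : G.dist z w = G.dist w z := dist_comm
    have : G.dist u' w = G.dist w u' := dist_comm
    have : G.dist u z = G.dist z u := dist_comm
    have : G.dist u' u = G.dist u u' := dist_comm
    omega
  · obtain ⟨z, hz, hzw⟩ := exists_adj_dist_add_one_eq hG hne.1.symm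
    have := hm.1 z hz
    have : G.dist w u' ≤ G.dist w z + G.dist z u' := hG.dist_triangle
    have : G.dist z w = G.dist w z := dist_comm
    have : G.dist u w = G.dist w u := dist_comm
    have : G.dist u' z = G.dist z u' := dist_comm
    omega

lemma IsStrongGenerator.mem_or_mem_of_mmd (hG : G.Connected) {S : Set V}
    (hS : IsStrongGenerator G S) {u u' : V} (hm : MMD G u u') (hne : u ≠ u') :
    u ∈ S ∨ u' ∈ S := by
  obtain ⟨w, hw, hres⟩ := hS u u' hne
  rcases hm.eq_or_eq_of_stronglyResolves hG hres with rfl | rfl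
  · exact Or.inl hw
  · exact Or.inr hw

lemma isStrongGenerator_of_forall_mmd [Finite V] (hG : G.Connected) {S : Set V}
    (hS : ∀ u u', MMD G u u' → u ≠ u' → u ∈ S ∨ u' ∈ S) : IsStrongGenerator G S := by
  intro x y hxy
  obtain ⟨u, u', hm, hux, hu'y⟩ := exists_mmd_dist_eq_add hG x y
  have := hG.pos_dist_of_ne hxy
  have hne : u ≠ u' := by
    rintro rfl
    simp only [SimpleGraph.dist_self] at hu'y
    omega
  rcases hS u u' hm hne with hu | hu'
  · exact ⟨u, hu, Or.inr hux⟩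
  · refine ⟨u', hu', Or.inl ?_⟩
    have : G.dist u' x ≤ G.dist u' y + G.dist y x := hG.dist_triangle
    have : G.dist u' u ≤ G.dist u' x + G.dist x u := hG.dist_triangle
    have : G.dist y u = G.dist u y := dist_comm
    have : G.dist x u = G.dist u x := dist_comm
    have : G.dist y x = G.dist x y := dist_comm
    omega

lemma mem_boundary_of_isStrongBasis [Fintype V] (hG : G.Connected) {W : Finset V}
    (hW : IsStrongBasis G W) {v : V} (hvW : v ∈ W) : v ∈ boundary G := by
  classical
  by_contra hv
  have hgen : IsStrongGenerator G ↑(W.erase v) := by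
    refine isStrongGenerator_of_forall_mmd hG fun u u' hm hne => ?_
    have hu : u ≠ v := fun h => hv ⟨u', h ▸ hm⟩
    have hu' : u' ≠ v := fun h => hv ⟨u, h ▸ hm.symm⟩
    simpa [hu, hu'] using hW.1.mem_or_mem_of_mmd hG hm hne
  have h₁ := sdim_le_card hgen
  have h₂ : 0 < #W := card_pos.mpr ⟨v, hvW⟩
  rw [card_erase_of_mem hvW, ← hW.2] at h₁
  omega

lemma exists_ne_forall_dist_ne_of_not_isStrongGenerator (hG : G.Connected) {F : Set V} {v : V}
    (hF : ¬ IsStrongGenerator G F) (hvF : IsStrongGenerator G (insert v F)) :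
    ∃ x, x ≠ v ∧ ∀ z ∈ F, G.dist z v ≠ G.dist z x + G.dist x v := by
  simp only [IsStrongGenerator, not_forall, exists_prop, not_exists, not_and] at hF
  obtain ⟨x, y, hxy, hnot⟩ := hF
  -- only `v` resolves `x, y`; the vertex of the pair farther from `v` is the one we want
  have key : ∀ x y, x ≠ y → (∀ z ∈ F, ¬ StronglyResolves G z x y) →
      G.dist v x = G.dist v y + G.dist y x →
      ∃ x, x ≠ v ∧ ∀ z ∈ F, G.dist z v ≠ G.dist z x + G.dist x v := by
    intro x y hxy hnot hv
    refine ⟨x, ?_, fun z hz hzx => hnot z hz (Or.inr ?_)⟩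
    · rintro rfl
      have := hG.pos_dist_of_ne hxy
      simp only [SimpleGraph.dist_self] at hv
      omega
    · have : G.dist z v ≤ G.dist z y + G.dist y v := hG.dist_triangle
      have : G.dist z y ≤ G.dist z x + G.dist x y := hG.dist_triangle
      have : G.dist y v = G.dist v y := dist_comm
      have : G.dist x v = G.dist v x := dist_comm
      have : G.dist y x = G.dist x y := dist_comm
      omega
  obtain ⟨w, hw, hres⟩ := hvF x y hxy
  obtain rfl : w = v := hw.resolve_right fun hwF => hnot w hwF hres
  rcases hres with h | h
  · exact key x y hxy hnot h
  · exact key y x hxy.symm (fun z hz hzr => hnot z hz (stronglyResolves_comm.mp hzr)) h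

end StrongResolving

lemma card_mul_le_sum_add_one {ι : Type*} [Fintype ι] {f : ι → ℕ} {m : ℕ}
    (h₁ : ∀ i, m ≤ f i + 1) (h₂ : ∀ i j, i ≠ j → m ≤ f i ∨ m ≤ f j) :
    Fintype.card ι * m ≤ ∑ i, f i + 1 := by
  classical
  by_cases h : ∀ i, m ≤ f i
  · calc Fintype.card ι * m = ∑ _i : ι, m := by simp
      _ ≤ ∑ i, f i := sum_le_sum fun i _ => h i
      _ ≤ _ := Nat.le_succ _
  obtain ⟨i₀, hi₀⟩ := not_forall.mp h
  have hrest : ∀ j ∈ univ.erase i₀, m ≤ f j := fun j hj =>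
    (h₂ i₀ j (ne_of_mem_erase hj).symm).resolve_left hi₀
  calc Fintype.card ι * m = m + ∑ _j ∈ univ.erase i₀, m := by
        rw [add_sum_erase univ (fun _ => m) (mem_univ i₀)]
        simp
    _ ≤ f i₀ + 1 + ∑ j ∈ univ.erase i₀, f j := add_le_add (h₁ i₀) (sum_le_sum hrest)
    _ = ∑ i, f i + 1 := by
        rw [← add_sum_erase _ _ (mem_univ i₀)]
        ring

section RootedProduct

variable {α β : Type*} {G : SimpleGraph α} {H : SimpleGraph β} {v : β}

def copyHom (G : SimpleGraph α) (H : SimpleGraph β) (v : β) (a : α) : H →g rootedProd G H v :=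
  ⟨fun y => (a, y), fun h => Or.inl ⟨rfl, h⟩⟩

def rootHom (G : SimpleGraph α) (H : SimpleGraph β) (v : β) : G →g rootedProd G H v :=
  ⟨fun a => (a, v), fun h => Or.inr ⟨rfl, rfl, h⟩⟩

open Classical in
noncomputable def rootedDist (G : SimpleGraph α) (H : SimpleGraph β) (v : β) (p q : α × β) : ℕ :=
  if p.1 = q.1 then H.dist p.2 q.2 else H.dist p.2 v + G.dist p.1 q.1 + H.dist v q.2

lemma rootedDist_of_eq (a : α) (x y : β) : rootedDist G H v (a, x) (a, y) = H.dist x y :=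
  if_pos rfl

lemma rootedDist_of_ne {a b : α} (hab : a ≠ b) (x y : β) :
    rootedDist G H v (a, x) (b, y) = H.dist x v + G.dist a b + H.dist v y :=
  if_neg hab

lemma rootedProd_adj {a b : α} {x y : β} :
    (rootedProd G H v).Adj (a, x) (b, y) ↔ a = b ∧ H.Adj x y ∨ x = v ∧ y = v ∧ G.Adj a b :=
  Iff.rfl

lemma rootedDist_le_add_one_of_adj {p q : α × β} (h : (rootedProd G H v).Adj p q)
    (r : α × β) : rootedDist G H v p r ≤ rootedDist G H v q r + 1 := by
  obtain ⟨a, x⟩ := p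
  obtain ⟨b, y⟩ := q
  obtain ⟨c, z⟩ := r
  rcases rootedProd_adj.mp h with ⟨rfl, hxy⟩ | ⟨rfl, rfl, hab⟩
  · have hxy₁ := dist_eq_one_iff_adj.mpr hxy
    obtain rfl | hac := eq_or_ne a c
    · simp only [rootedDist_of_eq]
      have := hxy.reachable.dist_triangle_left z
      omega
    · simp only [rootedDist_of_ne hac]
      have := hxy.reachable.dist_triangle_left v
      omega
  · have hab₁ := dist_eq_one_iff_adj.mpr hab
    obtain rfl | hac := eq_or_ne a c
    · simp only [rootedDist_of_eq, rootedDist_of_ne hab.ne.symm, SimpleGraph.dist_self]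
      omega
    obtain rfl | hbc := eq_or_ne b c
    · simp only [rootedDist_of_eq, rootedDist_of_ne hac, SimpleGraph.dist_self]
      omega
    · simp only [rootedDist_of_ne hac, rootedDist_of_ne hbc]
      have := hab.reachable.dist_triangle_left c
      omega

lemma rootedDist_le_length {p q : α × β} (w : (rootedProd G H v).Walk p q) :
    rootedDist G H v p q ≤ w.length := by
  induction w with
  | nil => simp [rootedDist]
  | cons h w ih =>
    rw [Walk.length_cons]
    exact (rootedDist_le_add_one_of_adj h _).trans (by omega)

lemma rootedDist_le_dist {p q : α × β} (hr : (rootedProd G H v).Reachable p q) :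
    rootedDist G H v p q ≤ (rootedProd G H v).dist p q := by
  obtain ⟨w, hw⟩ := hr.exists_walk_length_eq_dist
  exact hw ▸ rootedDist_le_length w

lemma rootedProd_dist_of_eq (hH : H.Connected) (a : α) (x y : β) :
    (rootedProd G H v).dist (a, x) (a, y) = H.dist x y := by
  obtain ⟨p, hp⟩ := hH.exists_walk_length_eq_dist x y
  let w : (rootedProd G H v).Walk (a, x) (a, y) := p.map (copyHom G H v a)
  have hw : w.length = H.dist x y := (Walk.length_map _ _).trans hp
  apply le_antisymm
  · exact hw ▸ dist_le w
  · simpa [rootedDist_of_eq] using rootedDist_le_dist (v := v) ⟨w⟩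

lemma rootedProd_dist_of_ne (hG : G.Connected) (hH : H.Connected) {a b : α} (hab : a ≠ b)
    (x y : β) :
    (rootedProd G H v).dist (a, x) (b, y) = H.dist x v + G.dist a b + H.dist v y := by
  obtain ⟨p₁, hp₁⟩ := hH.exists_walk_length_eq_dist x v
  obtain ⟨p₂, hp₂⟩ := hG.exists_walk_length_eq_dist a b
  obtain ⟨p₃, hp₃⟩ := hH.exists_walk_length_eq_dist v y
  let w₁ : (rootedProd G H v).Walk (a, x) (a, v) := p₁.map (copyHom G H v a)
  let w₂ : (rootedProd G H v).Walk (a, v) (b, v) := p₂.map (rootHom G H v)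
  let w₃ : (rootedProd G H v).Walk (b, v) (b, y) := p₃.map (copyHom G H v b)
  let w := w₁.append (w₂.append w₃)
  have h₁ : w₁.length = H.dist x v := (Walk.length_map _ _).trans hp₁
  have h₂ : w₂.length = G.dist a b := (Walk.length_map _ _).trans hp₂
  have h₃ : w₃.length = H.dist v y := (Walk.length_map _ _).trans hp₃
  have hw : w.length = H.dist x v + G.dist a b + H.dist v y := by
    rw [Walk.length_append, Walk.length_append, h₁, h₂, h₃, add_assoc]
  apply le_antisymm
  · exact hw ▸ dist_le w
  · simpa [rootedDist_of_ne hab] using rootedDist_le_dist ⟨w⟩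

lemma stronglyResolves_rootedProd_iff_of_eq (hH : H.Connected) (a : α) (z x y : β) :
    StronglyResolves (rootedProd G H v) (a, z) (a, x) (a, y) ↔ StronglyResolves H z x y := by
  simp only [StronglyResolves, rootedProd_dist_of_eq hH]

lemma stronglyResolves_rootedProd_iff_of_ne (hG : G.Connected) (hH : H.Connected) {a c : α}
    (hca : c ≠ a) (z x y : β) :
    StronglyResolves (rootedProd G H v) (c, z) (a, x) (a, y) ↔ StronglyResolves H v x y := by
  simp only [StronglyResolves, rootedProd_dist_of_ne hG hH hca, rootedProd_dist_of_eq hH]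
  omega

lemma stronglyResolves_rootedProd_cross_iff (hG : G.Connected) (hH : H.Connected) {a b : α}
    (hab : a ≠ b) (z x y : β) :
    StronglyResolves (rootedProd G H v) (a, z) (a, x) (b, y) ↔
      H.dist z v = H.dist z x + H.dist x v := by
  simp only [StronglyResolves, rootedProd_dist_of_eq hH, rootedProd_dist_of_ne hG hH hab,
    rootedProd_dist_of_ne hG hH hab.symm]
  have := hG.pos_dist_of_ne hab
  have : H.dist z x ≤ H.dist z v + H.dist v x := hH.dist_triangle
  have : G.dist b a = G.dist a b := dist_comm
  have : H.dist v x = H.dist x v := dist_comm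
  have : H.dist v y = H.dist y v := dist_comm
  omega

lemma not_stronglyResolves_rootedProd_cross (hG : G.Connected) (hH : H.Connected) {a b c : α}
    (hab : a ≠ b) (hca : c ≠ a) (hcb : c ≠ b) {x y : β} (hx : x ≠ v) (hy : y ≠ v) (z : β) :
    ¬ StronglyResolves (rootedProd G H v) (c, z) (a, x) (b, y) := by
  simp only [StronglyResolves, rootedProd_dist_of_ne hG hH hca, rootedProd_dist_of_ne hG hH hcb,
    rootedProd_dist_of_ne hG hH hab, rootedProd_dist_of_ne hG hH hab.symm]
  have := hH.pos_dist_of_ne hx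
  have := hH.pos_dist_of_ne hy
  have : G.dist c a ≤ G.dist c b + G.dist b a := hG.dist_triangle
  have : G.dist c b ≤ G.dist c a + G.dist a b := hG.dist_triangle
  have : G.dist b a = G.dist a b := dist_comm
  have : H.dist v x = H.dist x v := dist_comm
  have : H.dist v y = H.dist y v := dist_comm
  omega

noncomputable def slice (S : Finset (α × β)) (a : α) : Finset β :=
  S.preimage (Prod.mk a) (Prod.mk_right_injective a).injOn

lemma card_eq_sum_card_slice [Fintype α] (S : Finset (α × β)) : #S = ∑ a, #(slice S a) := by
  classical
  rw [card_eq_sum_card_fiberwise (f := Prod.fst) (t := univ) fun _ _ => mem_univ _]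
  refine sum_congr rfl fun a _ => ?_
  rw [← card_image_of_injective (slice S a) (Prod.mk_right_injective a)]
  congr 1
  ext ⟨c, z⟩
  simp only [slice, mem_filter, mem_image, mem_preimage, Prod.mk.injEq]
  aesop

lemma isStrongGenerator_insert_slice (hG : G.Connected) (hH : H.Connected)
    {S : Finset (α × β)} (hS : IsStrongGenerator (rootedProd G H v) S) (a : α) :
    IsStrongGenerator H (insert v (slice S a : Set β)) := by
  intro x y hxy
  obtain ⟨⟨c, z⟩, hzS, hres⟩ := hS (a, x) (a, y) (by simpa using hxy)
  obtain rfl | hca := eq_or_ne c a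
  · exact ⟨z, Or.inr (by simpa [slice] using hzS),
      (stronglyResolves_rootedProd_iff_of_eq hH c z x y).mp hres⟩
  · exact ⟨v, Or.inl rfl, (stronglyResolves_rootedProd_iff_of_ne hG hH hca z x y).mp hres⟩

lemma sdim_le_card_slice_add_one [Fintype β] (hG : G.Connected) (hH : H.Connected)
    {S : Finset (α × β)} (hS : IsStrongGenerator (rootedProd G H v) S) (a : α) :
    sdim H ≤ #(slice S a) + 1 := by
  classical
  calc sdim H ≤ #(insert v (slice S a)) := by
        apply sdim_le_card
        rw [coe_insert]
        exact isStrongGenerator_insert_slice hG hH hS a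
    _ ≤ #(slice S a) + 1 := card_insert_le _ _

lemma sdim_le_card_slice_or [Fintype β] (hG : G.Connected) (hH : H.Connected)
    {S : Finset (α × β)} (hS : IsStrongGenerator (rootedProd G H v) S) {a b : α} (hab : a ≠ b) :
    sdim H ≤ #(slice S a) ∨ sdim H ≤ #(slice S b) := by
  have hfar : ∀ c, #(slice S c) < sdim H →
      ∃ x, x ≠ v ∧ ∀ z ∈ slice S c, H.dist z v ≠ H.dist z x + H.dist x v := fun c hc =>
    exists_ne_forall_dist_ne_of_not_isStrongGenerator hH
      (fun hgen => (sdim_le_card hgen).not_gt hc) (isStrongGenerator_insert_slice hG hH hS c)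
  by_contra! h
  obtain ⟨x, hxv, hx⟩ := hfar a h.1
  obtain ⟨y, hyv, hy⟩ := hfar b h.2
  obtain ⟨⟨c, z⟩, hzS, hres⟩ := hS (a, x) (b, y) (by simp [hab])
  obtain rfl | hca := eq_or_ne c a
  · exact hx z (by simpa [slice] using hzS)
      ((stronglyResolves_rootedProd_cross_iff hG hH hab z x y).mp hres)
  obtain rfl | hcb := eq_or_ne c b
  · exact hy z (by simpa [slice] using hzS)
      ((stronglyResolves_rootedProd_cross_iff hG hH hab.symm z y x).mp
        (stronglyResolves_comm.mp hres))
  exact not_stronglyResolves_rootedProd_cross hG hH hab hca hcb hxv hyv z hres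

theorem card_mul_sdim_le_sdim_rootedProd_add_one [Fintype α] [Fintype β] (hG : G.Connected)
    (hH : H.Connected) : Fintype.card α * sdim H ≤ sdim (rootedProd G H v) + 1 := by
  obtain ⟨S, hS, hcard⟩ := exists_isStrongGenerator_card_eq_sdim (G := rootedProd G H v)
  rw [← hcard, card_eq_sum_card_slice]
  exact card_mul_le_sum_add_one (sdim_le_card_slice_add_one hG hH hS)
    fun a b hab => sdim_le_card_slice_or hG hH hS hab

def rootedGenerator (H : SimpleGraph β) (v : β) (W : Set β) (u₁ : α) : Set (α × β) :=
  {p | p.2 ≠ v ∧ (p.1 = u₁ ∧ p.2 ∈ W ∨ p.1 ≠ u₁ ∧ p.2 ∈ boundary H)}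

lemma isStrongGenerator_rootedGenerator [Finite β] [Nontrivial α] [Nontrivial β]
    (hG : G.Connected) (hH : H.Connected) {W : Set β} (hW : IsStrongGenerator H W) (u₁ : α) :
    IsStrongGenerator (rootedProd G H v) (rootedGenerator H v W u₁) := by
  rintro ⟨a, x⟩ ⟨b, y⟩ hne
  obtain rfl | hab := eq_or_ne a b
  · have hxy : x ≠ y := by simpa using hne
    obtain ⟨z, hz, hzv, hres⟩ := exists_mem_boundary_ne_stronglyResolves hH hxy v
    obtain rfl | hau := eq_or_ne a u₁
    · obtain ⟨w, hwW, hw⟩ := hW x y hxy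
      obtain rfl | hwv := eq_or_ne w v
      · obtain ⟨c, hc⟩ := exists_ne a
        exact ⟨(c, z), ⟨hzv, Or.inr ⟨hc, hz⟩⟩,
          (stronglyResolves_rootedProd_iff_of_ne hG hH hc z x y).mpr hw⟩
      · exact ⟨(a, w), ⟨hwv, Or.inl ⟨rfl, hwW⟩⟩,
          (stronglyResolves_rootedProd_iff_of_eq hH a w x y).mpr hw⟩
    · exact ⟨(a, z), ⟨hzv, Or.inr ⟨hau, hz⟩⟩,
        (stronglyResolves_rootedProd_iff_of_eq hH a z x y).mpr hres⟩
  · have cross : ∀ a b x y, a ≠ b → a ≠ u₁ →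
        ∃ p ∈ rootedGenerator H v W u₁, StronglyResolves (rootedProd G H v) p (a, x) (b, y) := by
      intro a b x y hab hau
      obtain ⟨z, hz, hzv, hzx⟩ := exists_mem_boundary_ne_dist_eq_add hH x v
      exact ⟨(a, z), ⟨hzv, Or.inr ⟨hau, hz⟩⟩,
        (stronglyResolves_rootedProd_cross_iff hG hH hab z x y).mpr hzx⟩
    obtain rfl | hau := eq_or_ne a u₁
    · obtain ⟨p, hp, hres⟩ := cross b a y x hab.symm hab.symm
      exact ⟨p, hp, stronglyResolves_comm.mp hres⟩
    · exact cross a b x y hab hau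

theorem sdim_rootedProd_le [Fintype α] [Fintype β] [Nontrivial α] [Nontrivial β]
    (hG : G.Connected) (hH : H.Connected) {W : Finset β} (hW : IsStrongGenerator H W)
    (hvW : v ∈ W) (hv : v ∈ boundary H) :
    sdim (rootedProd G H v) ≤ (#W - 1) + (Fintype.card α - 1) * ((boundary H).ncard - 1) := by
  classical
  obtain ⟨u₁⟩ := (inferInstance : Nonempty α)
  let S : Finset (α × β) :=
    {u₁} ×ˢ W.erase v ∪ (univ.erase u₁) ×ˢ (boundary H).toFinset.erase v
  have hS : (S : Set (α × β)) = rootedGenerator H v W u₁ := by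
    ext ⟨a, x⟩
    simp only [S, rootedGenerator, coe_union, coe_product, coe_singleton, coe_erase, coe_univ,
      Set.coe_toFinset]
    aesop
  have hdisj : Disjoint ({u₁} ×ˢ W.erase v) ((univ.erase u₁) ×ˢ (boundary H).toFinset.erase v) :=
    disjoint_product.mpr (Or.inl (by simp))
  calc sdim (rootedProd G H v) ≤ #S :=
        sdim_le_card (hS ▸ isStrongGenerator_rootedGenerator hG hH hW u₁)
    _ = _ := by
        rw [card_union_of_disjoint hdisj, card_product, card_product, card_singleton, one_mul,
          card_erase_of_mem hvW, card_erase_of_mem (mem_univ u₁), card_univ,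
          card_erase_of_mem (Set.mem_toFinset.mpr hv), Set.ncard_eq_toFinset_card']

end RootedProduct

theorem statement16 {α β : Type*} [Fintype α] [Fintype β]
    (G : SimpleGraph α) (H : SimpleGraph β)
    (hG : G.Connected) (hH : H.Connected)
    {n : ℕ} (hn : Fintype.card α = n) (h2 : 2 ≤ n) (h2b : 2 ≤ Fintype.card β)
    (v : β) (hv : ∃ S : Finset β, IsStrongBasis H S ∧ v ∈ S) :
    (n : ℤ) * sdim H - 1 ≤ (sdim (rootedProd G H v) : ℤ) ∧
    (sdim (rootedProd G H v) : ℤ) ≤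
      (((boundary H).ncard : ℤ) - 1) * ((n : ℤ) - 1) + sdim H - 1 := by
  subst hn
  obtain ⟨W, hW, hvW⟩ := hv
  have : Nontrivial α := Fintype.one_lt_card_iff_nontrivial.mp h2
  have : Nontrivial β := Fintype.one_lt_card_iff_nontrivial.mp h2b
  have hvB : v ∈ boundary H := mem_boundary_of_isStrongBasis hH hW hvW
  have hlow := card_mul_sdim_le_sdim_rootedProd_add_one (v := v) hG hH
  have hup := sdim_rootedProd_le hG hH hW.1 hvW hvB
  have hW₁ : 1 ≤ #W := card_pos.mpr ⟨v, hvW⟩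
  have hB₁ : 1 ≤ (boundary H).ncard := (Set.ncard_pos (Set.toFinite _)).mpr ⟨v, hvB⟩
  rw [hW.2] at hup hW₁
  zify [hW₁, hB₁, Fintype.card_pos] at hlow hup
  constructor <;> linarith

end RootedStrong
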